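/- For every partial multivalued function R on Baire space, if Σ_2^∞LLPO ≤ᶜ_W R ∐ LLPO_{2,1}, then there exists k ≥ 2 with Σ_k^∞LLPO ≤ᶜ_W R. -/

import Mathlib

namespace Weihrauch

/-- Baire space ℕ^ℕ. -/
abbrev Baire : Type := ℕ → ℕ

/-- The interleaving pairing homeomorphism ⟨p,q⟩. -/
def pair (p q : Baire) : Baire := fun n => if n % 2 = 0 then p (n / 2) else q (n / 2)

/-- First component of the interleaving pairing. -/
def left (z : Baire) : Baire := fun n => z (2 * n)

/-- Second component of the interleaving pairing. -/
def right (z : Baire) : Baire := fun n => z (2 * n + 1)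

/-- The sequence np = n,p(0),p(1),… . -/
def cons (n : ℕ) (p : Baire) : Baire := fun m => match m with
  | 0 => n
  | k + 1 => p k

/-- Drop the first entry of a sequence. -/
def tail (z : Baire) : Baire := fun n => z (n + 1)

/-- The constant zero sequence 0^ℕ. -/
def zero : Baire := fun _ => 0

/-- The constant one sequence 1^ℕ. -/
def one : Baire := fun _ => 1

/-- Partial multivalued functions on Baire space. -/
abbrev MV : Type := Baire → Set Baire

/-- The domain of a partial multivalued function. -/
def dom (P : MV) : Set Baire := {x | (P x).Nonempty}

/-- Continuous Weihrauch reducibility P ≤ᶜ_W Q. -/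
def CWle (P Q : MV) : Prop :=
  ∃ H K : Baire → Baire,
    ContinuousOn K (dom P) ∧
    (∀ x ∈ dom P, K x ∈ dom Q) ∧
    ContinuousOn H {z | ∃ x ∈ dom P, ∃ y ∈ Q (K x), z = pair x y} ∧
    (∀ x ∈ dom P, ∀ y ∈ Q (K x), H (pair x y) ∈ P x)

/-- Continuous Weihrauch equivalence P ≡ᶜ_W Q. -/
def CWequiv (P Q : MV) : Prop := CWle P Q ∧ CWle Q P

/-- The infimum operation (P ⊕ Q)(⟨p,q⟩) = 0P(p) ∪ 1Q(q) for p ∈ dom P, q ∈ dom Q. -/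
def oplus (P Q : MV) : MV := fun z =>
  {r | left z ∈ dom P ∧ right z ∈ dom Q ∧
       ((∃ s ∈ P (left z), r = cons 0 s) ∨ (∃ s ∈ Q (right z), r = cons 1 s))}

/-- The coproduct (P ∐ Q)(0p) = 0P(p), (P ∐ Q)(1p) = 1Q(p). -/
def coprod (P Q : MV) : MV := fun z =>
  {r | (z 0 = 0 ∧ ∃ s ∈ P (tail z), r = cons 0 s) ∨
       (z 0 = 1 ∧ ∃ s ∈ Q (tail z), r = cons 1 s)}

/-- The product (P × Q)(⟨p,q⟩) = {⟨r,s⟩ | r ∈ P(p), s ∈ Q(q)}. -/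
def prod (P Q : MV) : MV := fun z =>
  {r | ∃ s ∈ P (left z), ∃ t ∈ Q (right z), r = pair s t}

/-- A fixed finite tupling ⟨p₀,…,p_{n-1}⟩ of n sequences, by interleaving. -/
def ftup (n : ℕ) (f : ℕ → Baire) : Baire := fun m => f (m % n) (m / n)

/-- The i-th projection inverting `ftup n`: `fproj n i (ftup n f) = f i` for i < n. -/
def fproj (n i : ℕ) (z : Baire) : Baire := fun j => z (j * n + i)

/-- The finite parallelization P*, with P*(n⟨p₁,…,pₙ⟩) = {n⟨r₁,…,rₙ⟩ | rᵢ ∈ P(pᵢ)}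
for n ≥ 1 and P*(0p) = {0^ℕ}.  (Note every sequence is of the form `ftup n f`,
since `ftup n (fun i => fproj n i z) = z`.) -/
def fpar (P : MV) : MV := fun z =>
  {r | (z 0 = 0 ∧ r = zero) ∨
       (1 ≤ z 0 ∧ r 0 = z 0 ∧
        ∀ i < z 0, fproj (z 0) i (tail r) ∈ P (fproj (z 0) i (tail z)))}

/-- Countable tupling ⟨p₁,p₂,…⟩ via the pairing bijection ℕ×ℕ→ℕ
(the family is indexed by 0,1,2,…). -/
def ctup (f : ℕ → Baire) : Baire := fun m => f (Nat.unpair m).1 (Nat.unpair m).2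

/-- Projection inverting `ctup`: `cproj i (ctup f) = f i`. -/
def cproj (i : ℕ) (z : Baire) : Baire := fun j => z (Nat.pair i j)

/-- The 1-indexed component pᵢ of a countable tuple z = ⟨p₁,p₂,…⟩ (for i ≥ 1). -/
def comp (z : Baire) (i : ℕ) : Baire := cproj (i - 1) z

/-- LLPO_{n,1}: at most one pair (i,j) with pᵢ(j) ≠ 0 in the domain;
values are the i0^ℕ with 1 ≤ i ≤ n and pᵢ = 0^ℕ. -/
def LLPOn (n : ℕ) : MV := fun z =>
  {r | (∀ i j i' j', 1 ≤ i → 1 ≤ i' → comp z i j ≠ 0 → comp z i' j' ≠ 0 →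
          (i = i' ∧ j = j')) ∧
       ∃ i, 1 ≤ i ∧ i ≤ n ∧ comp z i = zero ∧ r = cons i zero}

/-- LLPO_{∞,m}: at most m pairs (i,j) with pᵢ(j) ≠ 0 in the domain;
values are the i0^ℕ with pᵢ = 0^ℕ. -/
def LLPOinf (m : ℕ) : MV := fun z =>
  {r | (∃ s : Finset (ℕ × ℕ), s.card ≤ m ∧ ∀ i j, 1 ≤ i → comp z i j ≠ 0 → (i, j) ∈ s) ∧
       ∃ i, 1 ≤ i ∧ comp z i = zero ∧ r = cons i zero}

/-- The sequence 0ⁿ10^ℕ. -/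
def zeros1 (n : ℕ) : Baire := fun m => if m = n then 1 else 0

/-- Σ_k^∞LLPO(⟨0^ℕ,p⟩) = LLPO_{∞,2}(p), Σ_k^∞LLPO(⟨0ⁿ10^ℕ,p⟩) = LLPO_{n,1}(p) for n ≥ k. -/
def SigmaLLPO (k : ℕ) : MV := fun z =>
  {r | (left z = zero ∧ r ∈ LLPOinf 2 (right z)) ∨
       (∃ n, k ≤ n ∧ left z = zeros1 n ∧ r ∈ LLPOn n (right z))}

/-- c_𝒜, with dom(c_𝒜) = {0^ℕ} and c_𝒜(0^ℕ) = 𝒜. -/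
def cA (A : Set Baire) : MV := fun z => {r | z = zero ∧ r ∈ A}

/-- d_𝒜, with dom(d_𝒜) = 𝒜 and d_𝒜(x) = {1^ℕ} for x ∈ 𝒜. -/
def dA (A : Set Baire) : MV := fun z => {r | z ∈ A ∧ r = one}

/-- Continuous Medvedev reducibility 𝒜 ≤ᶜ_M 𝒝. -/
def CMle (A B : Set Baire) : Prop :=
  ∃ H : Baire → Baire, ContinuousOn H B ∧ ∀ x ∈ B, H x ∈ A

/-- The Medvedev sum 𝒜 + 𝒝 = 0𝒜 ∪ 1𝒝. -/
def msum (A B : Set Baire) : Set Baire := (cons 0 '' A) ∪ (cons 1 '' B)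

/-- The Medvedev product 𝒜 × 𝒝 = {⟨p,q⟩ | p ∈ 𝒜, q ∈ 𝒝}. -/
def mprod (A B : Set Baire) : Set Baire := {z | ∃ p ∈ A, ∃ q ∈ B, z = pair p q}

end Weihrauch



namespace Weihrauch

/-! ### Basic lemmas -/

lemma left_pair (p q : Baire) : left (pair p q) = p := by
  funext n
  have h1 : (2 * n) % 2 = 0 := by omega
  have h2 : (2 * n) / 2 = n := by omega
  simp [left, pair, h1, h2]

lemma right_pair (p q : Baire) : right (pair p q) = q := by
  funext n
  have h1 : (2 * n + 1) % 2 = 1 := by omega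
  have h2 : (2 * n + 1) / 2 = n := by omega
  simp [right, pair, h1, h2]

lemma comp_apply (z : Baire) (i j : ℕ) : comp z i j = z (Nat.pair (i - 1) j) := rfl

lemma comp_zero (i : ℕ) : comp zero i = zero := rfl

lemma left_zero : left zero = zero := rfl

lemma right_zero : right zero = zero := rfl

lemma zeros1_ne_zero (n : ℕ) : zeros1 n ≠ zero := by
  intro h
  have := congrFun h n
  simp [zeros1, zero] at this

lemma zeros1_inj {n m : ℕ} (h : zeros1 n = zeros1 m) : n = m := by
  have := congrFun h n
  by_contra hc
  simp [zeros1, hc] at this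

lemma cons_zero_inj {a b : ℕ} (h : cons a zero = cons b zero) : a = b := congrFun h 0

/-! ### Continuity toolbox -/

lemma exists_modulus {f : Baire → Baire} {S : Set Baire} (hf : ContinuousOn f S)
    {x : Baire} (hx : x ∈ S) (d : ℕ) :
    ∃ N, ∀ y ∈ S, (∀ i < N, y i = x i) → f y d = f x d := by
  have h1 : ContinuousWithinAt f S x := hf x hx
  have h2 : Filter.Tendsto (fun y => f y d) (nhdsWithin x S) (nhds (f x d)) :=
    ((continuous_apply d).tendsto _).comp h1
  have h3 : {y | f y d = f x d} ∈ nhdsWithin x S := by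
    have : {f x d} ∈ nhds (f x d) := by
      rw [nhds_discrete]; exact rfl
    exact h2 this
  rw [mem_nhdsWithin] at h3
  obtain ⟨U, hUopen, hxU, hsub⟩ := h3
  have hU : U ∈ nhds x := hUopen.mem_nhds hxU
  rw [nhds_pi, Filter.mem_pi] at hU
  obtain ⟨I, hIfin, t, ht, hsub2⟩ := hU
  obtain ⟨b, hb⟩ := hIfin.bddAbove
  refine ⟨b + 1, fun y hyS hagree => ?_⟩
  have hyU : y ∈ U := by
    apply hsub2
    intro i hi
    have : y i = x i := hagree i (by have := hb hi; omega)
    rw [this]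
    have := ht i
    rw [nhds_discrete] at this
    exact this
  exact hsub ⟨hyU, hyS⟩

lemma continuous_tail : Continuous tail :=
  continuous_pi fun n => continuous_apply (n + 1)

lemma continuous_left : Continuous left :=
  continuous_pi fun n => continuous_apply (2 * n)

lemma continuous_right : Continuous right :=
  continuous_pi fun n => continuous_apply (2 * n + 1)

lemma continuous_cons (n : ℕ) : Continuous (cons n) := by
  apply continuous_pi
  intro m
  cases m with
  | zero => simpa [cons] using continuous_const
  | succ k => simpa [cons] using continuous_apply k

lemma continuous_pair_comp {f g : Baire → Baire} (hf : Continuous f) (hg : Continuous g) :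
    Continuous fun x => pair (f x) (g x) := by
  apply continuous_pi
  intro m
  by_cases h : m % 2 = 0
  · simpa [pair, h, Function.comp_def] using (continuous_apply (m / 2)).comp hf
  · simpa [pair, h, Function.comp_def] using (continuous_apply (m / 2)).comp hg

/-! ### Padding -/

/-- Shift every column of a countable tuple `N` places to the right. -/
def pad (N : ℕ) (q : Baire) : Baire := fun m =>
  if (Nat.unpair m).2 < N then 0
  else q (Nat.pair (Nat.unpair m).1 ((Nat.unpair m).2 - N))

lemma continuous_pad (N : ℕ) : Continuous (pad N) := by
  apply continuous_pi
  intro m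
  by_cases h : (Nat.unpair m).2 < N
  · simpa [pad, h] using continuous_const
  · simpa [pad, h] using continuous_apply _

lemma comp_pad (N : ℕ) (q : Baire) (i j : ℕ) :
    comp (pad N q) i j = if j < N then 0 else comp q i (j - N) := by
  simp [comp, cproj, pad, Nat.unpair_pair]

lemma pad_small {m N : ℕ} (q : Baire) (h : m < N) : pad N q m = 0 := by
  have : (Nat.unpair m).2 < N := lt_of_le_of_lt (Nat.unpair_right_le m) h
  simp [pad, this]

lemma comp_pad_eq_zero {N : ℕ} {q : Baire} {i : ℕ} :
    comp (pad N q) i = zero ↔ comp q i = zero := by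
  constructor
  · intro h
    funext j
    have h2 := congrFun h (j + N)
    rw [comp_pad, if_neg (by omega)] at h2
    simpa [zero] using h2
  · intro h
    funext j
    rw [comp_pad]
    split
    · rfl
    · rw [h]; rfl

lemma comp_pad_err {N : ℕ} {q : Baire} {i j : ℕ} (h : comp (pad N q) i j ≠ 0) :
    N ≤ j ∧ comp q i (j - N) ≠ 0 := by
  rw [comp_pad] at h
  by_cases h' : j < N
  · simp [h'] at h
  · rw [if_neg h'] at h
    exact ⟨by omega, h⟩

lemma LLPOinf_pad (m N : ℕ) (q : Baire) : LLPOinf m (pad N q) = LLPOinf m q := by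
  ext r
  simp only [LLPOinf, Set.mem_setOf_eq]
  constructor
  · rintro ⟨⟨s, hcard, hcov⟩, i, hi1, hiz, hr⟩
    refine ⟨⟨s.image (fun p => (p.1, p.2 - N)), le_trans Finset.card_image_le hcard, ?_⟩,
      i, hi1, comp_pad_eq_zero.mp hiz, hr⟩
    intro i' j' hi' herr
    have herr2 : comp (pad N q) i' (j' + N) ≠ 0 := by
      rw [comp_pad, if_neg (by omega)]
      simpa using herr
    have hmem := hcov i' (j' + N) hi' herr2
    exact Finset.mem_image.mpr ⟨_, hmem, by simp⟩
  · rintro ⟨⟨s, hcard, hcov⟩, i, hi1, hiz, hr⟩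
    refine ⟨⟨s.image (fun p => (p.1, p.2 + N)), le_trans Finset.card_image_le hcard, ?_⟩,
      i, hi1, comp_pad_eq_zero.mpr hiz, hr⟩
    intro i' j' hi' herr
    obtain ⟨hjN, herr'⟩ := comp_pad_err herr
    refine Finset.mem_image.mpr ⟨(i', j' - N), hcov _ _ hi' herr', ?_⟩
    have hj : j' - N + N = j' := by omega
    rw [hj]

lemma LLPOn_pad (n N : ℕ) (q : Baire) : LLPOn n (pad N q) = LLPOn n q := by
  ext r
  simp only [LLPOn, Set.mem_setOf_eq]
  constructor
  · rintro ⟨huniq, i, h1, h2, h3, h4⟩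
    refine ⟨?_, i, h1, h2, comp_pad_eq_zero.mp h3, h4⟩
    intro a b a' b' ha ha' hb hb'
    have e1 : comp (pad N q) a (b + N) ≠ 0 := by
      rw [comp_pad, if_neg (by omega)]; simpa using hb
    have e2 : comp (pad N q) a' (b' + N) ≠ 0 := by
      rw [comp_pad, if_neg (by omega)]; simpa using hb'
    have := huniq a (b + N) a' (b' + N) ha ha' e1 e2
    exact ⟨this.1, by omega⟩
  · rintro ⟨huniq, i, h1, h2, h3, h4⟩
    refine ⟨?_, i, h1, h2, comp_pad_eq_zero.mpr h3, h4⟩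
    intro a b a' b' ha ha' hb hb'
    obtain ⟨hN1, e1⟩ := comp_pad_err hb
    obtain ⟨hN2, e2⟩ := comp_pad_err hb'
    have := huniq a (b - N) a' (b' - N) ha ha' e1 e2
    exact ⟨this.1, by omega⟩

/-! ### The embedding into `SigmaLLPO 2` -/

/-- The embedding: keep the left part, pad the right part. -/
def emb (N : ℕ) (x : Baire) : Baire := pair (left x) (pad N (right x))

lemma continuous_emb (N : ℕ) : Continuous (emb N) :=
  continuous_pair_comp continuous_left ((continuous_pad N).comp continuous_right)

lemma left_emb (N : ℕ) (x : Baire) : left (emb N x) = left x := left_pair _ _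

lemma right_emb (N : ℕ) (x : Baire) : right (emb N x) = pad N (right x) := right_pair _ _

lemma sigma_branch {k : ℕ} {x : Baire} (h : x ∈ dom (SigmaLLPO k)) :
    left x = zero ∨ ∃ n, k ≤ n ∧ left x = zeros1 n := by
  obtain ⟨r, hr⟩ := h
  rcases hr with ⟨h1, _⟩ | ⟨n, h1, h2, _⟩
  · exact Or.inl h1
  · exact Or.inr ⟨n, h1, h2⟩

lemma sigma_emb_eq {k : ℕ} (hk : 2 ≤ k) (N : ℕ) {x : Baire}
    (hb : left x = zero ∨ ∃ n, k ≤ n ∧ left x = zeros1 n) :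
    SigmaLLPO 2 (emb N x) = SigmaLLPO k x := by
  ext r
  simp only [SigmaLLPO, Set.mem_setOf_eq, left_emb, right_emb]
  rcases hb with h | ⟨n, hn, h⟩
  · rw [h, LLPOinf_pad]
    constructor
    · rintro (⟨_, hr⟩ | ⟨n', _, hz, _⟩)
      · exact Or.inl ⟨by trivial, hr⟩
      · exact absurd hz.symm (zeros1_ne_zero n')
    · rintro (⟨_, hr⟩ | ⟨n', _, hz, _⟩)
      · exact Or.inl ⟨by trivial, hr⟩
      · exact absurd hz.symm (zeros1_ne_zero n')
  · rw [h]
    simp only [LLPOn_pad]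
    constructor
    · rintro (⟨hz, _⟩ | ⟨n', hn', hz, hr⟩)
      · exact absurd hz (zeros1_ne_zero n)
      · have : n = n' := zeros1_inj hz
        subst this
        exact Or.inr ⟨n, hn, by trivial, hr⟩
    · rintro (⟨hz, _⟩ | ⟨n', hn', hz, hr⟩)
      · exact absurd hz (zeros1_ne_zero n)
      · have : n = n' := zeros1_inj hz
        subst this
        exact Or.inr ⟨n, by omega, by trivial, hr⟩

lemma emb_mem_dom {k N : ℕ} {x : Baire} (hk : 2 ≤ k) (hx : x ∈ dom (SigmaLLPO k)) :
    emb N x ∈ dom (SigmaLLPO 2) := by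
  have := sigma_emb_eq hk N (sigma_branch hx)
  simpa [dom, this] using hx

lemma emb_agree {x : Baire} {N : ℕ}
    (hb : left x = zero ∨ ∃ n, N ≤ n ∧ left x = zeros1 n) :
    ∀ i < N, emb N x i = zero i := by
  intro i hi
  show emb N x i = 0
  by_cases h : i % 2 = 0
  · have : emb N x i = left x (i / 2) := by simp [emb, pair, h]
    rw [this]
    rcases hb with hz | ⟨n, hn, hz⟩
    · rw [hz]; rfl
    · rw [hz]
      have : i / 2 ≠ n := by omega
      simp [zeros1, this]
  · have : emb N x i = pad N (right x) (i / 2) := by simp [emb, pair, h]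
    rw [this]
    exact pad_small _ (by omega)

lemma coprod_dom_cases {P Q : MV} {z : Baire} (h : z ∈ dom (coprod P Q)) :
    (z 0 = 0 ∧ tail z ∈ dom P) ∨ (z 0 = 1 ∧ tail z ∈ dom Q) := by
  obtain ⟨r, hr⟩ := h
  rcases hr with ⟨h0, s, hs, _⟩ | ⟨h0, s, hs, _⟩
  · exact Or.inl ⟨h0, s, hs⟩
  · exact Or.inr ⟨h0, s, hs⟩

lemma cons_mem_coprod_left {P Q : MV} {z y : Baire} (h0 : z 0 = 0) (hy : y ∈ P (tail z)) :
    cons 0 y ∈ coprod P Q z := Or.inl ⟨h0, y, hy, rfl⟩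

lemma cons_mem_coprod_right {P Q : MV} {z y : Baire} (h0 : z 0 = 1) (hy : y ∈ Q (tail z)) :
    cons 1 y ∈ coprod P Q z := Or.inr ⟨h0, y, hy, rfl⟩

lemma zero_mem_dom_sigma (k : ℕ) : zero ∈ dom (SigmaLLPO k) := by
  refine ⟨cons 1 zero, Or.inl ⟨rfl, ⟨⟨∅, by simp, ?_⟩, 1, le_rfl, rfl, rfl⟩⟩⟩
  intro i j _ herr
  exact absurd rfl herr

lemma sigma_left_zero {k : ℕ} {z : Baire} (h : left z = zero) :
    SigmaLLPO k z = LLPOinf 2 (right z) := by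
  ext r
  simp only [SigmaLLPO, Set.mem_setOf_eq, h]
  constructor
  · rintro (⟨_, hr⟩ | ⟨n', _, hz, _⟩)
    · exact hr
    · exact absurd hz.symm (zeros1_ne_zero n')
  · intro hr
    exact Or.inl ⟨by trivial, hr⟩

/-! ### Error sequences for the adversary argument -/

/-- A sequence with (at most two) nonzero entries, at columns `a+1`, `b+1`, row `N`. -/
def errSeq (a b N : ℕ) : Baire := fun m =>
  if m = Nat.pair a N ∨ m = Nat.pair b N then 1 else 0

lemma errSeq_pos {a b N m : ℕ} (h : errSeq a b N m ≠ 0) :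
    m = Nat.pair a N ∨ m = Nat.pair b N := by
  by_contra hc
  push_neg at hc
  simp [errSeq, hc.1, hc.2] at h

lemma errSeq_small {a b N m : ℕ} (h : m < N) : errSeq a b N m = 0 := by
  by_contra hne
  rcases errSeq_pos hne with e | e
  · rw [e] at h; exact absurd h (not_lt.mpr (Nat.right_le_pair _ _))
  · rw [e] at h; exact absurd h (not_lt.mpr (Nat.right_le_pair _ _))

lemma errSeq_comp_left (a b N : ℕ) : comp (errSeq a b N) (a + 1) N = 1 := by
  show errSeq a b N (Nat.pair (a + 1 - 1) N) = 1
  simp [errSeq]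

lemma errSeq_comp_right (a b N : ℕ) : comp (errSeq a b N) (b + 1) N = 1 := by
  show errSeq a b N (Nat.pair (b + 1 - 1) N) = 1
  simp [errSeq]

lemma errSeq_zerocol {a b N i : ℕ} (h1 : 1 ≤ i) (h2 : i ≠ a + 1) (h3 : i ≠ b + 1) :
    comp (errSeq a b N) i = zero := by
  funext j
  show errSeq a b N (Nat.pair (i - 1) j) = 0
  by_contra h
  rcases errSeq_pos h with e | e
  · have := (Nat.pair_eq_pair.mp e).1
    omega
  · have := (Nat.pair_eq_pair.mp e).1
    omega

lemma errSeq_mem_dom (a b N : ℕ) : errSeq a b N ∈ dom (LLPOinf 2) := by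
  refine ⟨cons (a + b + 3) zero, ⟨{(a + 1, N), (b + 1, N)}, ?_, ?_⟩,
    a + b + 3, by omega, errSeq_zerocol (by omega) (by omega) (by omega), rfl⟩
  · exact le_trans (Finset.card_insert_le _ _) (by simp)
  · intro i j h1 herr
    have herr' : errSeq a b N (Nat.pair (i - 1) j) ≠ 0 := herr
    rcases errSeq_pos herr' with e | e
    · obtain ⟨e1, e2⟩ := Nat.pair_eq_pair.mp e
      have : i = a + 1 := by omega
      subst this; subst e2
      simp
    · obtain ⟨e1, e2⟩ := Nat.pair_eq_pair.mp e
      have : i = b + 1 := by omega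
      subst this; subst e2
      simp

/-! ### LLPO_{∞,2} is not continuously Weihrauch reducible to LLPO_{2,1} -/

lemma not_LLPOinf_le_LLPOn2 : ¬ CWle (LLPOinf 2) (LLPOn 2) := by
  rintro ⟨H, K, hKc, hKd, hHc, hHcorr⟩
  have hz : zero ∈ dom (LLPOinf 2) := by
    refine ⟨cons 1 zero, ⟨∅, by simp, ?_⟩, 1, le_rfl, rfl, rfl⟩
    intro i j _ herr
    exact absurd rfl herr
  -- at-most-one-error property of K x
  have uniqK : ∀ x ∈ dom (LLPOinf 2), ∀ i j i' j', 1 ≤ i → 1 ≤ i' →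
      comp (K x) i j ≠ 0 → comp (K x) i' j' ≠ 0 → i = i' ∧ j = j' := by
    intro x hx
    obtain ⟨r, hr⟩ := hKd x hx
    exact hr.1
  have hvalid : ∀ x ∈ dom (LLPOinf 2), ∀ c, 1 ≤ c → c ≤ 2 → comp (K x) c = zero →
      cons c zero ∈ LLPOn 2 (K x) := by
    intro x hx c h1 h2 h3
    exact ⟨uniqK x hx, c, h1, h2, h3, rfl⟩
  have hzero_or : ∀ x ∈ dom (LLPOinf 2), comp (K x) 1 = zero ∨ comp (K x) 2 = zero := by
    intro x hx
    by_contra hcon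
    push_neg at hcon
    obtain ⟨j₁, e₁⟩ := Function.ne_iff.mp hcon.1
    obtain ⟨j₂, e₂⟩ := Function.ne_iff.mp hcon.2
    have := uniqK x hx 1 j₁ 2 j₂ le_rfl (by omega) e₁ e₂
    omega
  have hout : ∀ x ∈ dom (LLPOinf 2), ∀ c, cons c zero ∈ LLPOn 2 (K x) →
      ∃ i, 1 ≤ i ∧ comp x i = zero ∧ H (pair x (cons c zero)) = cons i zero := by
    intro x hx c hc
    obtain ⟨_, i, h1, h2, h3⟩ := hHcorr x hx _ hc
    exact ⟨i, h1, h2, h3⟩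
  set SH : Set Baire := {z | ∃ x ∈ dom (LLPOinf 2), ∃ y ∈ LLPOn 2 (K x), z = pair x y} with hSH
  -- agreement transfer to pairs
  have pair_agree : ∀ (x y : Baire) (M N : ℕ), M ≤ N →
      (∀ m < N, x m = 0) → ∀ m < M, pair x y m = pair zero y m := by
    intro x y M N hMN hx m hm
    by_cases h : m % 2 = 0
    · simp only [pair, h, if_pos]
      rw [hx (m / 2) (by omega)]
      rfl
    · simp [pair, h]
  by_cases hcase : comp (K zero) 1 = zero ∧ comp (K zero) 2 = zero
  · -- both columns of K zero are zero: use two errors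
    have v₁ := hvalid zero hz 1 le_rfl (by omega) hcase.1
    have v₂ := hvalid zero hz 2 (by omega) le_rfl hcase.2
    obtain ⟨i₁, hi₁, _, hr₁⟩ := hout zero hz 1 v₁
    obtain ⟨i₂, hi₂, _, hr₂⟩ := hout zero hz 2 v₂
    have hmem₁ : pair zero (cons 1 zero) ∈ SH := ⟨zero, hz, _, v₁, rfl⟩
    have hmem₂ : pair zero (cons 2 zero) ∈ SH := ⟨zero, hz, _, v₂, rfl⟩
    obtain ⟨M₁, hM₁⟩ := exists_modulus hHc hmem₁ 0
    obtain ⟨M₂, hM₂⟩ := exists_modulus hHc hmem₂ 0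
    set N := max M₁ M₂ with hN
    set x₁ := errSeq (i₁ - 1) (i₂ - 1) N with hx₁
    have hx₁dom := errSeq_mem_dom (i₁ - 1) (i₂ - 1) N
    have key : ∀ c i, 1 ≤ c → c ≤ 2 → comp (K x₁) c = zero →
        (H (pair zero (cons c zero)) = cons i zero) → ∀ M, M ≤ N →
        (∀ w ∈ SH, (∀ m < M, w m = pair zero (cons c zero) m) →
          H w 0 = H (pair zero (cons c zero)) 0) →
        i = i₁ ∨ i = i₂ → False := by
      intro c i hc1 hc2 hcz hri M hMN hM hii
      have v := hvalid x₁ hx₁dom c hc1 hc2 hcz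
      obtain ⟨i', hi', hicz, hre⟩ := hout x₁ hx₁dom c v
      have hmem : pair x₁ (cons c zero) ∈ SH := ⟨x₁, hx₁dom, _, v, rfl⟩
      have e0 : H (pair x₁ (cons c zero)) 0 = H (pair zero (cons c zero)) 0 :=
        hM _ hmem (pair_agree x₁ (cons c zero) M N hMN (fun m hm => errSeq_small hm))
      rw [hre, hri] at e0
      have hii' : i' = i := e0
      rw [hii'] at hicz
      rcases hii with e | e
      · rw [e] at hicz
        have h1 := errSeq_comp_left (i₁ - 1) (i₂ - 1) N
        have hw : i₁ - 1 + 1 = i₁ := by omega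
        rw [hw] at h1
        have := congrFun hicz N
        rw [h1] at this
        simp [zero] at this
      · rw [e] at hicz
        have h1 := errSeq_comp_right (i₁ - 1) (i₂ - 1) N
        have hw : i₂ - 1 + 1 = i₂ := by omega
        rw [hw] at h1
        have := congrFun hicz N
        rw [h1] at this
        simp [zero] at this
    rcases hzero_or x₁ hx₁dom with hc | hc
    · exact key 1 i₁ le_rfl (by omega) hc hr₁ M₁ (le_max_left _ _)
        (fun w hw ha => hM₁ w hw ha) (Or.inl rfl)
    · exact key 2 i₂ (by omega) le_rfl hc hr₂ M₂ (le_max_right _ _)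
        (fun w hw ha => hM₂ w hw ha) (Or.inr rfl)
  · -- one column of K zero is nonzero: use one error plus a K-modulus
    have hKor := hzero_or zero hz
    obtain ⟨c, c₀, hc1, hc2, hc01, hc02, hne, hczero, hcnz⟩ :
        ∃ c c₀, 1 ≤ c ∧ c ≤ 2 ∧ 1 ≤ c₀ ∧ c₀ ≤ 2 ∧ c ≠ c₀ ∧
          comp (K zero) c = zero ∧ comp (K zero) c₀ ≠ zero := by
      rcases hKor with h | h
      · exact ⟨1, 2, le_rfl, by omega, by omega, le_rfl, by omega, h,
          fun h2 => hcase ⟨h, h2⟩⟩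
      · exact ⟨2, 1, by omega, le_rfl, le_rfl, by omega, by omega, h,
          fun h1 => hcase ⟨h1, h⟩⟩
    obtain ⟨j₀, hj₀⟩ := Function.ne_iff.mp hcnz
    have hj₀' : comp (K zero) c₀ j₀ ≠ 0 := hj₀
    have v := hvalid zero hz c hc1 hc2 hczero
    obtain ⟨i, hi1, _, hri⟩ := hout zero hz c v
    have hmem : pair zero (cons c zero) ∈ SH := ⟨zero, hz, _, v, rfl⟩
    obtain ⟨MH, hMH⟩ := exists_modulus hHc hmem 0
    obtain ⟨MK, hMK⟩ := exists_modulus hKc hz (Nat.pair (c₀ - 1) j₀)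
    set N := max MH MK with hN
    set x₁ := errSeq (i - 1) (i - 1) N with hx₁
    have hx₁dom := errSeq_mem_dom (i - 1) (i - 1) N
    have hx₁small : ∀ m < N, x₁ m = 0 := fun m hm => errSeq_small hm
    have hKval : K x₁ (Nat.pair (c₀ - 1) j₀) = K zero (Nat.pair (c₀ - 1) j₀) :=
      hMK x₁ hx₁dom (fun m hm => hx₁small m (by omega))
    have herrK : comp (K x₁) c₀ j₀ ≠ 0 := by
      show K x₁ (Nat.pair (c₀ - 1) j₀) ≠ 0
      rw [hKval]
      exact hj₀'
    have hczero₁ : comp (K x₁) c = zero := by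
      funext j
      show comp (K x₁) c j = 0
      by_contra h
      have := uniqK x₁ hx₁dom c j c₀ j₀ hc1 hc01 h herrK
      exact hne this.1
    have v₁ := hvalid x₁ hx₁dom c hc1 hc2 hczero₁
    obtain ⟨i', hi', hicz, hre⟩ := hout x₁ hx₁dom c v₁
    have hmem₁ : pair x₁ (cons c zero) ∈ SH := ⟨x₁, hx₁dom, _, v₁, rfl⟩
    have e0 : H (pair x₁ (cons c zero)) 0 = H (pair zero (cons c zero)) 0 :=
      hMH _ hmem₁ (pair_agree x₁ (cons c zero) MH N (le_max_left _ _) hx₁small)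
    rw [hre, hri] at e0
    have hii' : i' = i := e0
    rw [hii'] at hicz
    have h1 := errSeq_comp_left (i - 1) (i - 1) N
    have hiw : i - 1 + 1 = i := by omega
    rw [hiw] at h1
    have := congrFun hicz N
    rw [h1] at this
    simp [zero] at this

end Weihrauch

open Weihrauch

/-- If Σ_2^∞LLPO ≤ᶜ_W R ∐ LLPO_{2,1}, then Σ_k^∞LLPO ≤ᶜ_W R for some k ≥ 2. -/
theorem SigmaLLPO_reduction_absorb (R : MV)
    (h : CWle (SigmaLLPO 2) (coprod R (LLPOn 2))) :
    ∃ k : ℕ, 2 ≤ k ∧ CWle (SigmaLLPO k) R := by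
  obtain ⟨H, K, hKc, hKd, hHc, hHcorr⟩ := h
  have hzdom : zero ∈ dom (SigmaLLPO 2) := zero_mem_dom_sigma 2
  obtain ⟨N₀, hN₀⟩ := exists_modulus hKc hzdom 0
  have hKzdom := hKd zero hzdom
  rcases coprod_dom_cases hKzdom with ⟨h0, hdomR⟩ | ⟨h1, hdomL⟩
  · -- K sends the all-zero input to the R side
    refine ⟨N₀ + 2, by omega, ?_⟩
    set k := N₀ + 2 with hk
    have hk2 : 2 ≤ k := by omega
    -- key facts for x ∈ dom (SigmaLLPO k)
    have branch' : ∀ x ∈ dom (SigmaLLPO k),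
        left x = zero ∨ ∃ n, N₀ ≤ n ∧ left x = zeros1 n := by
      intro x hx
      rcases sigma_branch hx with h | ⟨n, hn, hz⟩
      · exact Or.inl h
      · exact Or.inr ⟨n, by omega, hz⟩
    have hEdom : ∀ x ∈ dom (SigmaLLPO k), emb N₀ x ∈ dom (SigmaLLPO 2) :=
      fun x hx => emb_mem_dom hk2 hx
    have hK0 : ∀ x ∈ dom (SigmaLLPO k), K (emb N₀ x) 0 = 0 := by
      intro x hx
      have := hN₀ (emb N₀ x) (hEdom x hx) (emb_agree (branch' x hx))
      rw [this, h0]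
    have hKR : ∀ x ∈ dom (SigmaLLPO k), tail (K (emb N₀ x)) ∈ dom R := by
      intro x hx
      rcases coprod_dom_cases (hKd _ (hEdom x hx)) with ⟨_, hd⟩ | ⟨h1', _⟩
      · exact hd
      · rw [hK0 x hx] at h1'
        omega
    refine ⟨fun w => H (pair (emb N₀ (left w)) (cons 0 (right w))),
      fun x => tail (K (emb N₀ x)), ?_, ?_, ?_, ?_⟩
    · exact continuous_tail.comp_continuousOn
        (hKc.comp (continuous_emb N₀).continuousOn (fun x hx => hEdom x hx))
    · exact hKR
    · apply hHc.comp
        (continuous_pair_comp ((continuous_emb N₀).comp continuous_left)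
          ((continuous_cons 0).comp continuous_right)).continuousOn
      rintro w ⟨x, hx, y, hy, rfl⟩
      simp only [left_pair, right_pair]
      exact ⟨emb N₀ x, hEdom x hx, cons 0 y,
        cons_mem_coprod_left (hK0 x hx) hy,
        by simp [Function.comp, left_pair, right_pair]⟩
    · intro x hx y hy
      simp only [left_pair, right_pair]
      have := hHcorr (emb N₀ x) (hEdom x hx) (cons 0 y)
        (cons_mem_coprod_left (hK0 x hx) hy)
      rwa [sigma_emb_eq hk2 N₀ (sigma_branch hx)] at this
  · -- K sends the all-zero input to the LLPO_{2,1} side: contradiction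
    exfalso
    apply not_LLPOinf_le_LLPOn2
    have hval : ∀ q : Baire, SigmaLLPO 2 (emb N₀ (pair zero q)) = LLPOinf 2 q := by
      intro q
      rw [sigma_left_zero (by rw [left_emb, left_pair]),
        right_emb, right_pair, LLPOinf_pad]
    have hEdom : ∀ q ∈ dom (LLPOinf 2), emb N₀ (pair zero q) ∈ dom (SigmaLLPO 2) := by
      intro q hq
      simpa [dom, hval q] using hq
    have hagree : ∀ q : Baire, ∀ i < N₀, emb N₀ (pair zero q) i = zero i :=
      fun q => emb_agree (Or.inl (left_pair _ _))
    have hK1 : ∀ q ∈ dom (LLPOinf 2), K (emb N₀ (pair zero q)) 0 = 1 := by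
      intro q hq
      have := hN₀ _ (hEdom q hq) (hagree q)
      rw [this, h1]
    have hKL : ∀ q ∈ dom (LLPOinf 2), tail (K (emb N₀ (pair zero q))) ∈ dom (LLPOn 2) := by
      intro q hq
      rcases coprod_dom_cases (hKd _ (hEdom q hq)) with ⟨h0', _⟩ | ⟨_, hd⟩
      · rw [hK1 q hq] at h0'
        omega
      · exact hd
    refine ⟨fun w => H (pair (emb N₀ (pair zero (left w))) (cons 1 (right w))),
      fun q => tail (K (emb N₀ (pair zero q))), ?_, ?_, ?_, ?_⟩
    · apply continuous_tail.comp_continuousOn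
      apply hKc.comp
        ((continuous_emb N₀).comp (continuous_pair_comp continuous_const continuous_id)).continuousOn
      exact fun q hq => hEdom q hq
    · exact hKL
    · apply hHc.comp
        (continuous_pair_comp
          ((continuous_emb N₀).comp
            ((continuous_pair_comp continuous_const continuous_id).comp continuous_left))
          ((continuous_cons 1).comp continuous_right)).continuousOn
      rintro w ⟨q, hq, y, hy, rfl⟩
      simp only [left_pair, right_pair]
      exact ⟨emb N₀ (pair zero q), hEdom q hq, cons 1 y,
        cons_mem_coprod_right (hK1 q hq) hy,
        by simp [Function.comp, left_pair, right_pair]⟩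
    · intro q hq y hy
      simp only [left_pair, right_pair]
      have := hHcorr (emb N₀ (pair zero q)) (hEdom q hq) (cons 1 y)
        (cons_mem_coprod_right (hK1 q hq) hy)
      rwa [hval q] at this
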